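/- arXiv:2603.28061 — 10 statements merged into one kernel-verified Lean document; each statement's English description precedes it below -/
import Mathlib

section
/- Let n, k ≥ 1 and t ≥ 1 be natural numbers, let a : Fin k → ℝ, let α : Fin k → (Fin n → ℕ) be exponent vectors, and define the k-sparse polynomial function f : (Fin n → ℝ) → ℝ by f(x) = ∑_{i∈Fin k} a_i · ∏_{j∈Fin n} (x_j)^(α_i(j)). Fix u ∈ (Fin n → ℝ) and set m_i = ∏_j (u_j)^(α_i(j)) for i ∈ Fin k. Then the Hankel matrix H_t(f,u) factors as H_t(f,u) = Bᵀ · D · B, where B is the k × t matrix with entries B(i,r) = (m_i)^r for i ∈ Fin k and r ∈ Fin t (exponents taken 0-indexed), and D is the k × k diagonal matrix with diagonal entries a_1, …, a_k. -/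
/-- The `t`-dimensional Hankel matrix of `f : ℝⁿ → ℝ` at `u`: its `(i,j)` entry
(0-indexed) is `f(u^(i+j))`, where `u^m` is the coordinatewise power. -/
noncomputable def hankel {n : ℕ} (t : ℕ) (f : (Fin n → ℝ) → ℝ) (u : Fin n → ℝ) :
    Matrix (Fin t) (Fin t) ℝ :=
  Matrix.of fun i j => f fun l => u l ^ ((i : ℕ) + (j : ℕ))

/-- the Hankel matrix of a `k`-sparse polynomial factors as `Bᵀ · D · B`
with `B(i,r) = mᵢʳ` (Vandermonde-like) and `D = diag(a)`. -/
theorem stmt_2 (n k t : ℕ) (hn : 1 ≤ n) (hk : 1 ≤ k) (ht : 1 ≤ t)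
    (a : Fin k → ℝ) (α : Fin k → Fin n → ℕ)
    (f : (Fin n → ℝ) → ℝ)
    (hf : ∀ x, f x = ∑ i, a i * ∏ j, x j ^ α i j)
    (u : Fin n → ℝ) (m : Fin k → ℝ) (hm : ∀ i, m i = ∏ j, u j ^ α i j) :
    hankel t f u =
      (Matrix.of fun (i : Fin k) (r : Fin t) => m i ^ (r : ℕ)).transpose *
        Matrix.diagonal a *
        (Matrix.of fun (i : Fin k) (r : Fin t) => m i ^ (r : ℕ)) := by
  ext i j
  simp only [hankel, Matrix.of_apply, Matrix.mul_apply, Matrix.transpose_apply,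
    Matrix.diagonal_apply, ite_mul, mul_ite, zero_mul, mul_zero,
    Finset.sum_ite_eq, Finset.sum_ite_eq', Finset.mem_univ, if_true]
  rw [hf]
  apply Finset.sum_congr rfl
  intro p _
  have h1 : ∀ l, (u l ^ ((i : ℕ) + (j : ℕ))) ^ α p l = (u l ^ α p l) ^ ((i:ℕ)+(j:ℕ)) := by
    intro l; rw [← pow_mul, ← pow_mul, Nat.mul_comm]
  have h2 : (∏ l, (u l ^ ((i:ℕ)+(j:ℕ))) ^ α p l) = m p ^ ((i:ℕ)+(j:ℕ)) := by
    rw [hm, ← Finset.prod_pow]; exact Finset.prod_congr rfl fun l _ => h1 l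
  rw [h2, pow_add]; ring
end

section
/- Let n, k ≥ 1 and t ≥ 1 be natural numbers, let a : Fin k → ℝ, let α : Fin k → (Fin n → ℕ) be exponent vectors, and define f : (Fin n → ℝ) → ℝ by f(x) = ∑_{i∈Fin k} a_i · ∏_{j∈Fin n} (x_j)^(α_i(j)). Fix u ∈ (Fin n → ℝ) and set m_i = ∏_j (u_j)^(α_i(j)). Then det(H_t(f,u)) = ∑_{S ⊆ Fin k, |S| = t} ( ∏_{i∈S} a_i ) · ∏_{i,j∈S, i<j} (m_j − m_i)², where the outer sum ranges over all subsets S of Fin k of cardinality t (and equals 0 when t > k). -/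
open Finset Matrix Equiv

private lemma mem_image_orderEmbOfFin {k t : ℕ} (S : Finset (Fin k)) (hS : S.card = t)
    {x : Fin k} (hx : x ∈ S) : ∃ i : Fin t, S.orderEmbOfFin hS i = x := by
  have h := S.range_orderEmbOfFin hS
  have : x ∈ Set.range (S.orderEmbOfFin hS) := by rw [h]; exact hx
  exact this

private lemma image_orderEmbOfFin {k t : ℕ} (S : Finset (Fin k)) (hS : S.card = t) :
    Finset.image (S.orderEmbOfFin hS) Finset.univ = S := by
  ext x
  simp only [Finset.mem_image, Finset.mem_univ, true_and]
  exact ⟨fun ⟨i, hi⟩ => hi ▸ S.orderEmbOfFin_mem hS i, mem_image_orderEmbOfFin S hS⟩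

private lemma prod_orderEmbOfFin' {k t : ℕ} (S : Finset (Fin k)) (hS : S.card = t)
    (g : Fin k → ℝ) : ∏ i : Fin t, g (S.orderEmbOfFin hS i) = ∏ l ∈ S, g l :=
  Finset.prod_bij (fun i _ => S.orderEmbOfFin hS i)
    (fun i _ => S.orderEmbOfFin_mem hS i)
    (fun i _ j _ h => (S.orderEmbOfFin hS).injective h)
    (fun x hx => by obtain ⟨i, hi⟩ := mem_image_orderEmbOfFin S hS hx; exact ⟨i, mem_univ i, hi⟩)
    (fun i _ => rfl)

private lemma pair_prod {k t : ℕ} (S : Finset (Fin k)) (hS : S.card = t) (m : Fin k → ℝ) :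
    ∏ p ∈ S.offDiag.filter (fun p => p.1 < p.2), (m p.2 - m p.1) ^ 2
      = ∏ i : Fin t, ∏ j ∈ Finset.Ioi i,
          (m (S.orderEmbOfFin hS j) - m (S.orderEmbOfFin hS i)) ^ 2 := by
  set σ := S.orderEmbOfFin hS with hσ
  rw [Finset.prod_sigma']
  refine (Finset.prod_bij (fun x _ => ((σ x.1 : Fin k), (σ x.2 : Fin k))) ?_ ?_ ?_ ?_).symm
  · rintro ⟨i, j⟩ hij
    simp only [Finset.mem_sigma, Finset.mem_univ, Finset.mem_Ioi, true_and] at hij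
    have hlt : σ i < σ j := (S.orderEmbOfFin hS).strictMono hij
    simp only [Finset.mem_filter, Finset.mem_offDiag]
    exact ⟨⟨S.orderEmbOfFin_mem hS i, S.orderEmbOfFin_mem hS j, ne_of_lt hlt⟩, hlt⟩
  · rintro ⟨i, j⟩ _ ⟨i', j'⟩ _ h
    simp only [Prod.mk.injEq] at h
    obtain ⟨h1, h2⟩ := h
    have e1 := (S.orderEmbOfFin hS).injective h1
    have e2 := (S.orderEmbOfFin hS).injective h2
    subst e1; subst e2; rfl
  · rintro ⟨x, y⟩ hxy
    simp only [Finset.mem_filter, Finset.mem_offDiag] at hxy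
    obtain ⟨⟨hx, hy, _⟩, hlt⟩ := hxy
    obtain ⟨i, hi⟩ := mem_image_orderEmbOfFin S hS hx
    obtain ⟨j, hj⟩ := mem_image_orderEmbOfFin S hS hy
    refine ⟨⟨i, j⟩, ?_, by simp [hσ, hi, hj]⟩
    have : i < j := by
      have := hlt; rw [← hi, ← hj] at this
      exact (S.orderEmbOfFin hS).strictMono.lt_iff_lt.mp this
    simp [this]
  · rintro ⟨i, j⟩ _; rfl

private lemma key (t k : ℕ) (a m : Fin k → ℝ) :
    (Matrix.of fun (i j : Fin t) => ∑ l, a l * (m l ^ (i:ℕ) * m l ^ (j:ℕ))).det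
      = ∑ S ∈ Finset.powersetCard t (Finset.univ : Finset (Fin k)),
          (∏ i ∈ S, a i) *
            ∏ p ∈ S.offDiag.filter (fun p => p.1 < p.2), (m p.2 - m p.1) ^ 2 := by
  classical
  set d := (Matrix.detRowAlternating : (Fin t → ℝ) [⋀^Fin t]→ₗ[ℝ] ℝ) with hd
  -- the term associated to an index choice r
  set T : (Fin t → Fin k) → ℝ := fun r =>
    (∏ i, a (r i) * m (r i) ^ (i:ℕ)) * (Matrix.of fun (i j : Fin t) => m (r i) ^ (j:ℕ)).det
    with hT
  have step1 : (Matrix.of fun (i j : Fin t) => ∑ l, a l * (m l ^ (i:ℕ) * m l ^ (j:ℕ))).det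
      = ∑ r : Fin t → Fin k, T r := by
    have h0 : (Matrix.of fun (i j : Fin t) => ∑ l, a l * (m l ^ (i:ℕ) * m l ^ (j:ℕ)))
        = fun (i : Fin t) => ∑ l : Fin k,
            (a l * m l ^ (i:ℕ)) • (fun j : Fin t => m l ^ (j:ℕ)) := by
      funext i j
      simp [Finset.sum_apply, mul_assoc]
    have h1 : (Matrix.of fun (i j : Fin t) => ∑ l, a l * (m l ^ (i:ℕ) * m l ^ (j:ℕ))).det
        = d.toMultilinearMap (fun (i : Fin t) => ∑ l : Fin k,
            (a l * m l ^ (i:ℕ)) • (fun j : Fin t => m l ^ (j:ℕ))) := by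
      rw [← h0]; rfl
    rw [h1, d.toMultilinearMap.map_sum]
    refine Finset.sum_congr rfl fun r _ => ?_
    rw [d.toMultilinearMap.map_smul_univ]
    rfl
  -- kill non-injective r
  have step2 : ∑ r : Fin t → Fin k, T r
      = ∑ r ∈ Finset.univ.filter (fun r : Fin t → Fin k => Function.Injective r), T r := by
    refine (Finset.sum_subset (Finset.filter_subset _ _) fun r _ hr => ?_).symm
    simp only [Finset.mem_filter, Finset.mem_univ, true_and] at hr
    rw [Function.not_injective_iff] at hr
    obtain ⟨i, j, hij, hne⟩ := hr
    have : (Matrix.of fun (i j : Fin t) => m (r i) ^ (j:ℕ)).det = 0 :=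
      Matrix.det_zero_of_row_eq hne (by funext j'; simp [hij])
    simp [hT, this]
  -- fiberwise over the image
  have step3 : ∑ r ∈ Finset.univ.filter (fun r : Fin t → Fin k => Function.Injective r), T r
      = ∑ S ∈ Finset.powersetCard t (Finset.univ : Finset (Fin k)),
          ∑ r ∈ (Finset.univ.filter (fun r : Fin t → Fin k => Function.Injective r)).filter
            (fun r => Finset.image r Finset.univ = S), T r := by
    refine (Finset.sum_fiberwise_of_maps_to ?_ T).symm
    intro r hr
    simp only [Finset.mem_filter, Finset.mem_univ, true_and] at hr
    rw [Finset.mem_powersetCard_univ, Finset.card_image_of_injective _ hr, Finset.card_univ,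
      Fintype.card_fin]
  rw [step1, step2, step3]
  refine Finset.sum_congr rfl fun S hS => ?_
  have hSc : S.card = t := Finset.mem_powersetCard_univ.mp hS
  set σ := S.orderEmbOfFin hSc with hσ
  -- the fiber over S is parametrized by permutations
  have step4 : ∑ r ∈ (Finset.univ.filter (fun r : Fin t → Fin k => Function.Injective r)).filter
        (fun r => Finset.image r Finset.univ = S), T r
      = ∑ π : Equiv.Perm (Fin t), T (fun i => σ (π i)) := by
    refine (Finset.sum_bij (fun (π : Equiv.Perm (Fin t)) _ => fun i => σ (π i)) ?_ ?_ ?_ ?_).symm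
    · intro π _
      simp only [Finset.mem_filter, Finset.mem_univ, true_and]
      constructor
      · exact fun x y h => π.injective (σ.injective h)
      · have : Finset.image (fun i => σ (π i)) Finset.univ
            = Finset.image σ (Finset.image π Finset.univ) := by
          rw [Finset.image_image]; rfl
        rw [this, Finset.image_univ_equiv, image_orderEmbOfFin S hSc]
    · intro π _ π' _ h
      exact Equiv.ext fun i => σ.injective (congrFun h i)
    · intro r hr
      simp only [Finset.mem_filter, Finset.mem_univ, true_and] at hr
      obtain ⟨hinj, himg⟩ := hr
      have hmem : ∀ i, r i ∈ S := by
        intro i; rw [← himg]; exact Finset.mem_image_of_mem r (Finset.mem_univ i)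
      set g : Fin t → Fin t := fun i => (S.orderIsoOfFin hSc).symm ⟨r i, hmem i⟩ with hg
      have hσg : ∀ i, σ (g i) = r i := by
        intro i
        have : (σ (g i) : Fin k) = ((S.orderIsoOfFin hSc) (g i) : Fin k) :=
          (S.coe_orderIsoOfFin_apply hSc (g i)).symm
        rw [this, hg]
        simp
      have hginj : Function.Injective g := by
        intro x y hxy
        apply hinj
        rw [← hσg x, ← hσg y, hxy]
      refine ⟨Equiv.ofBijective g (Finite.injective_iff_bijective.mp hginj), Finset.mem_univ _, ?_⟩
      funext i
      exact hσg i
    · intro π _; rfl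
  rw [step4]
  -- evaluate the sum over permutations
  set V : Matrix (Fin t) (Fin t) ℝ := Matrix.vandermonde (fun i => m (σ i)) with hV
  have step5 : ∀ π : Equiv.Perm (Fin t),
      T (fun i => σ (π i)) = (∏ l ∈ S, a l) * V.det *
        ((Equiv.Perm.sign π : ℝ) * ∏ i, V (π i) i) := by
    intro π
    have hdet : (Matrix.of fun (i j : Fin t) => m (σ (π i)) ^ (j:ℕ)).det
        = (Equiv.Perm.sign π : ℝ) * V.det := by
      have : (Matrix.of fun (i j : Fin t) => m (σ (π i)) ^ (j:ℕ)) = V.submatrix π id := by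
        funext i j; rfl
      rw [this, Matrix.det_permute]
    have hprod : (∏ i, a (σ (π i)) * m (σ (π i)) ^ (i:ℕ))
        = (∏ l ∈ S, a l) * ∏ i, V (π i) i := by
      rw [Finset.prod_mul_distrib]
      congr 1
      · rw [← prod_orderEmbOfFin' S hSc a]
        exact Equiv.prod_comp π (fun i => a (σ i))
    show (∏ i, a (σ (π i)) * m (σ (π i)) ^ (i:ℕ)) *
        (Matrix.of fun (i j : Fin t) => m (σ (π i)) ^ (j:ℕ)).det = _
    rw [hprod, hdet]
    ring
  rw [Finset.sum_congr rfl (fun π _ => step5 π), ← Finset.mul_sum]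
  have step6 : ∑ π : Equiv.Perm (Fin t), ((Equiv.Perm.sign π : ℝ) * ∏ i, V (π i) i) = V.det := by
    rw [Matrix.det_apply']
  rw [step6, pair_prod S hSc m]
  have hVdet : V.det = ∏ i : Fin t, ∏ j ∈ Finset.Ioi i, (m (σ j) - m (σ i)) := by
    rw [hV, Matrix.det_vandermonde]
  rw [hVdet]
  simp_rw [Finset.prod_pow]
  ring

/-- determinant expansion of the Hankel matrix of a `k`-sparse polynomial:
`det H_t(f,u) = ∑_{S ⊆ [k], |S| = t} (∏_{i∈S} a_i) ∏_{i<j ∈ S} (m_j - m_i)²`. -/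
theorem stmt_3 (n k t : ℕ) (hn : 1 ≤ n) (hk : 1 ≤ k) (ht : 1 ≤ t)
    (a : Fin k → ℝ) (α : Fin k → Fin n → ℕ)
    (f : (Fin n → ℝ) → ℝ)
    (hf : ∀ x, f x = ∑ i, a i * ∏ j, x j ^ α i j)
    (u : Fin n → ℝ) (m : Fin k → ℝ) (hm : ∀ i, m i = ∏ j, u j ^ α i j) :
    (hankel t f u).det =
      ∑ S ∈ Finset.powersetCard t (Finset.univ : Finset (Fin k)),
        (∏ i ∈ S, a i) *
          ∏ p ∈ S.offDiag.filter (fun p => p.1 < p.2), (m p.2 - m p.1) ^ 2 := by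
  have hH : hankel t f u
      = Matrix.of fun (i j : Fin t) => ∑ l, a l * (m l ^ (i:ℕ) * m l ^ (j:ℕ)) := by
    funext i j
    show f (fun l => u l ^ ((i:ℕ) + (j:ℕ))) = _
    rw [hf]
    refine Finset.sum_congr rfl fun l _ => ?_
    congr 1
    have : ∏ j', (u j' ^ ((i:ℕ) + (j:ℕ))) ^ α l j' = (∏ j', u j' ^ α l j') ^ ((i:ℕ) + (j:ℕ)) := by
      rw [← Finset.prod_pow]
      exact Finset.prod_congr rfl fun j' _ => pow_right_comm _ _ _
    rw [this, ← hm l, pow_add]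
  rw [hH, key]
end

section
/- Let n, k ≥ 1 and t be natural numbers with t > k, let a : Fin k → ℝ, let α : Fin k → (Fin n → ℕ), and define f : (Fin n → ℝ) → ℝ by f(x) = ∑_{i∈Fin k} a_i · ∏_{j∈Fin n} (x_j)^(α_i(j)). Then for every u ∈ (Fin n → ℝ), the t-dimensional Hankel matrix H_t(f,u) is singular: det(H_t(f,u)) = 0. -/
/-- if `t > k`, the `t`-dimensional Hankel matrix of a `k`-sparse
polynomial is singular at every point `u`. -/
theorem stmt_4 (n k t : ℕ) (hn : 1 ≤ n) (hk : 1 ≤ k) (htk : k < t)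
    (a : Fin k → ℝ) (α : Fin k → Fin n → ℕ)
    (f : (Fin n → ℝ) → ℝ)
    (hf : ∀ x, f x = ∑ i, a i * ∏ j, x j ^ α i j) :
    ∀ u : Fin n → ℝ, (hankel t f u).det = 0 := by
  intro u
  set c : Fin k → ℝ := fun s => ∏ j, u j ^ α s j with hc
  have hH : hankel t f u =
      (Matrix.of fun (i : Fin t) (s : Fin k) => a s * c s ^ (i : ℕ)) *
      (Matrix.of fun (s : Fin k) (j : Fin t) => c s ^ (j : ℕ)) := by
    ext i j
    simp only [hankel, Matrix.of_apply, Matrix.mul_apply, hf, hc]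
    refine Finset.sum_congr rfl fun s _ => ?_
    have : ∀ l : Fin n, (u l ^ ((i : ℕ) + (j : ℕ))) ^ α s l
        = (u l ^ α s l) ^ ((i : ℕ) + (j : ℕ)) := by
      intro l; rw [← pow_mul, ← pow_mul, Nat.mul_comm]
    rw [Finset.prod_congr rfl fun l _ => this l, Finset.prod_pow, pow_add]
    ring
  by_contra hdet
  have hunit : IsUnit (hankel t f u) :=
    (Matrix.isUnit_iff_isUnit_det _).mpr (isUnit_iff_ne_zero.mpr hdet)
  have hrank : (hankel t f u).rank = t := by
    rw [Matrix.rank_of_isUnit _ hunit, Fintype.card_fin]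
  have hle : (hankel t f u).rank ≤ k := by
    rw [hH]
    exact le_trans (Matrix.rank_mul_le_right _ _)
      (le_trans (Matrix.rank_le_card_height _) (by simp))
  omega
end

section
/- Let n, k ≥ 1 be natural numbers, let a : Fin k → ℝ with a_i ≠ 0 for every i, let α : Fin k → (Fin n → ℕ) be pairwise distinct exponent vectors, and define f : (Fin n → ℝ) → ℝ by f(x) = ∑_{i∈Fin k} a_i · ∏_{j∈Fin n} (x_j)^(α_i(j)). Then there exists a point u ∈ (Fin n → ℝ) such that det(H_k(f,u)) ≠ 0; in other words, the function u ↦ det(H_k(f,u)) is not identically zero. -/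
/-- Base-`B` representations with digits `< B` are unique. -/
lemma digits_inj : ∀ (n B : ℕ) (d d' : Fin n → ℕ), (∀ j, d j < B) → (∀ j, d' j < B) →
    (∑ j, d j * B ^ (j : ℕ)) = (∑ j, d' j * B ^ (j : ℕ)) → d = d' := by
  intro n
  induction n with
  | zero => intro B d d' _ _ _; ext j; exact j.elim0
  | succ n ih =>
    intro B d d' hd hd' hsum
    have hB : 0 < B := lt_of_le_of_lt (Nat.zero_le _) (hd 0)
    have split : ∀ g : Fin (n+1) → ℕ, (∑ j, g j * B ^ (j : ℕ))
        = g 0 + (∑ j : Fin n, g j.succ * B ^ (j : ℕ)) * B := by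
      intro g
      rw [Fin.sum_univ_succ, Finset.sum_mul]
      simp [Fin.val_succ, pow_succ, mul_assoc]
    rw [split d, split d'] at hsum
    have h0 : d 0 = d' 0 := by
      have := congrArg (· % B) hsum
      simpa [Nat.add_mul_mod_self_right, Nat.mod_eq_of_lt (hd 0),
        Nat.mod_eq_of_lt (hd' 0)] using this
    have hrest : (∑ j : Fin n, d j.succ * B ^ (j : ℕ))
        = ∑ j : Fin n, d' j.succ * B ^ (j : ℕ) := by
      have := hsum
      rw [h0] at this
      have h2 := Nat.add_left_cancel this
      exact Nat.eq_of_mul_eq_mul_right hB h2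
    have htail : (fun j : Fin n => d j.succ) = fun j => d' j.succ :=
      ih B _ _ (fun j => hd j.succ) (fun j => hd' j.succ) hrest
    ext j
    refine Fin.cases h0 (fun i => ?_) j
    exact congrFun htail i

/-- for an exactly `k`-sparse polynomial (all coefficients nonzero,
pairwise distinct exponent vectors), the map `u ↦ det H_k(f,u)` is not identically
zero. -/
theorem stmt_5 (n k : ℕ) (hn : 1 ≤ n) (hk : 1 ≤ k)
    (a : Fin k → ℝ) (ha : ∀ i, a i ≠ 0)
    (α : Fin k → Fin n → ℕ) (hα : Function.Injective α)
    (f : (Fin n → ℝ) → ℝ)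
    (hf : ∀ x, f x = ∑ i, a i * ∏ j, x j ^ α i j) :
    ∃ u : Fin n → ℝ, (hankel k f u).det ≠ 0 := by
  classical
  set B : ℕ := (Finset.univ.sup fun t : Fin k => Finset.univ.sup (α t)) + 1 with hBdef
  have hαB : ∀ t j, α t j < B := by
    intro t j
    exact Nat.lt_succ_of_le (le_trans (Finset.le_sup (Finset.mem_univ j))
      (Finset.le_sup (f := fun t => Finset.univ.sup (α t)) (Finset.mem_univ t)))
  set e : Fin k → ℕ := fun t => ∑ j, α t j * B ^ (j : ℕ) with hedef
  have he : Function.Injective e := by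
    intro s t hst
    exact hα (digits_inj n B (α s) (α t) (hαB s) (hαB t) hst)
  set x : Fin k → ℝ := fun t => (2 : ℝ) ^ e t with hxdef
  have hx : Function.Injective x := by
    intro s t hst
    exact he ((pow_right_strictMono₀ one_lt_two).injective hst)
  set u : Fin n → ℝ := fun l => (2 : ℝ) ^ (B ^ (l : ℕ)) with hudef
  refine ⟨u, ?_⟩
  have key : ∀ m : ℕ, f (fun l => u l ^ m) = ∑ t, a t * x t ^ m := by
    intro m
    rw [hf]
    refine Finset.sum_congr rfl fun t _ => ?_
    congr 1
    have : ∀ l : Fin n, (u l ^ m) ^ α t l = (2 : ℝ) ^ (B ^ (l : ℕ) * m * α t l) := by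
      intro l
      rw [hudef]
      rw [← pow_mul, ← pow_mul, mul_assoc]
    rw [Finset.prod_congr rfl fun l _ => this l, Finset.prod_pow_eq_pow_sum, hxdef,
      ← pow_mul]
    congr 1
    rw [hedef, Finset.sum_mul]
    refine Finset.sum_congr rfl fun l _ => ?_
    ring_nf
  have hmat : hankel k f u
      = (Matrix.vandermonde x).transpose * (Matrix.diagonal a * Matrix.vandermonde x) := by
    ext i j
    show f (fun l => u l ^ ((i : ℕ) + (j : ℕ))) = _
    rw [key, Matrix.mul_apply]
    simp only [Matrix.transpose_apply, Matrix.diagonal_mul, Matrix.vandermonde_apply]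
    refine Finset.sum_congr rfl fun t _ => ?_
    rw [pow_add]; ring
  rw [hmat, Matrix.det_mul, Matrix.det_mul, Matrix.det_transpose,
    Matrix.det_vandermonde, Matrix.det_diagonal]
  have hV : (∏ i : Fin k, ∏ j ∈ Finset.Ioi i, (x j - x i)) ≠ 0 := by
    rw [Finset.prod_ne_zero_iff]
    intro i _
    rw [Finset.prod_ne_zero_iff]
    intro j hj
    have : i ≠ j := fun h => absurd (h ▸ Finset.mem_Ioi.mp hj) (lt_irrefl _)
    exact sub_ne_zero.mpr fun h => this (hx (h.symm))
  have hD : (∏ i : Fin k, a i) ≠ 0 := Finset.prod_ne_zero_iff.mpr fun i _ => ha i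
  exact mul_ne_zero hV (mul_ne_zero hD hV)
end

section
/- Let n ≥ 1 and d ≥ 0 be natural numbers, and let α : Fin n → ℕ be an exponent vector with ∑_{j∈Fin n} α_j ≤ d. Let μ be the n-fold product of the standard Gaussian measure N(0,1) on ℝ. Then ∫ ∏_{j∈Fin n} |u_j|^(α_j) dμ(u) ≤ 2^(d/2) · ⌈d/2⌉!, where 2^(d/2) denotes the real power and ⌈d/2⌉! is the factorial of the ceiling of d/2. -/
/-!
Weighted AM-GM with weights `α_j / S`, `S = ∑ α_j`, bounds the monomial `∏ |u_j| ^ α_j`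
pointwise by `∑ (α_j / S) |u_j| ^ S`; since every coordinate is standard Gaussian, its
expectation is at most the one-dimensional absolute moment `E |X| ^ S = 2^(S/2) Γ((S+1)/2) / √π`.
Finally `Γ(c + 1/2) ≤ √π c!` and `Γ(c + 1) = c!` give `Γ((S+1)/2) ≤ √π ⌈S/2⌉!`, and the bound
is monotone in the degree.
-/

open MeasureTheory ProbabilityTheory

open Real
open scoped NNReal Nat

namespace Real

lemma Gamma_nat_add_half_le (c : ℕ) : Gamma (c + 1 / 2) ≤ √π * c ! := by
  induction c with
  | zero => simpa using Gamma_one_half_eq.le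
  | succ c ih =>
    have hc : (0 : ℝ) < c + 1 / 2 := by positivity
    calc Gamma ((c + 1 : ℕ) + 1 / 2) = (c + 1 / 2) * Gamma (c + 1 / 2) := by
          rw [← Gamma_add_one hc.ne']; push_cast; ring_nf
      _ ≤ (c + 1) * (√π * c !) := by
          have Gamma_nonneg := (Gamma_pos_of_pos hc).le
          gcongr
          linarith
      _ = √π * (c + 1)! := by push_cast [Nat.factorial_succ]; ring

lemma Gamma_add_one_div_two_le (k : ℕ) : Gamma ((k + 1) / 2) ≤ √π * ⌈(k : ℝ) / 2⌉₊ ! := by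
  obtain ⟨c, rfl | rfl⟩ := Nat.even_or_odd' k
  · have hc : ((2 * c : ℕ) : ℝ) / 2 = c := by push_cast; ring
    rw [hc, Nat.ceil_natCast, show (((2 * c : ℕ) : ℝ) + 1) / 2 = c + 1 / 2 by push_cast; ring]
    exact Gamma_nat_add_half_le c
  · have hc : ⌈((2 * c + 1 : ℕ) : ℝ) / 2⌉₊ = c + 1 := by
      rw [Nat.ceil_eq_iff c.succ_ne_zero]; push_cast; constructor <;> linarith
    rw [hc, show (((2 * c + 1 : ℕ) : ℝ) + 1) / 2 = c + 1 by push_cast; ring,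
      Gamma_nat_eq_factorial]
    have one_le_sqrt_pi : 1 ≤ √π := one_le_sqrt.2 (by linarith [pi_gt_three])
    calc (c ! : ℝ) ≤ (c + 1)! := by exact_mod_cast Nat.factorial_le c.le_succ
      _ ≤ √π * (c + 1)! := le_mul_of_one_le_left (by positivity) one_le_sqrt_pi

lemma monotone_rpow_half_mul_factorial_ceil_half {c : ℝ} (hc : 1 ≤ c) :
    Monotone fun d : ℕ => c ^ ((d : ℝ) / 2) * (⌈(d : ℝ) / 2⌉₊ ! : ℝ) := by
  intro s d hsd
  have half_le : (s : ℝ) / 2 ≤ d / 2 := by gcongr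
  dsimp only
  gcongr

end Real

namespace ProbabilityTheory

lemma integrable_abs_pow_gaussianReal (m : ℝ) (v : ℝ≥0) (k : ℕ) :
    Integrable (fun x : ℝ => |x| ^ k) (gaussianReal m v) := by
  simpa using (memLp_id_gaussianReal (μ := m) (v := v) k).integrable_norm_pow'

lemma integral_abs_pow_gaussianReal {v : ℝ≥0} (hv : v ≠ 0) (k : ℕ) :
    ∫ x, |x| ^ k ∂gaussianReal 0 v = (2 * v) ^ ((k : ℝ) / 2) * Gamma ((k + 1) / 2) / √π := by
  have h2v : (0 : ℝ) < 2 * v := by positivity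
  have half_line : ∫ x in Set.Ioi (0 : ℝ), x ^ k * rexp (-(2 * (v : ℝ))⁻¹ * x ^ 2)
      = (2 * v) ^ (((k : ℝ) + 1) / 2) * (1 / 2) * Gamma ((k + 1) / 2) := by
    have gamma_integral := integral_rpow_mul_exp_neg_mul_rpow (q := k) two_pos
      (by linarith [k.cast_nonneg (α := ℝ)]) (inv_pos.2 h2v)
    simp only [Real.rpow_natCast, Real.rpow_two] at gamma_integral
    rw [gamma_integral, inv_rpow h2v.le, ← rpow_neg h2v.le, neg_div, neg_neg]
  rw [integral_gaussianReal_eq_integral_smul hv]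
  calc ∫ x, gaussianPDFReal 0 v x • |x| ^ k
      = (√(2 * π * v))⁻¹ * ∫ x, |x| ^ k * rexp (-(2 * (v : ℝ))⁻¹ * |x| ^ 2) := by
        rw [← integral_const_mul]
        congr 1 with x
        rw [gaussianPDFReal, smul_eq_mul, sq_abs, sub_zero, neg_mul, neg_div, div_eq_inv_mul]
        ring
    _ = (√(2 * π * v))⁻¹ *
          (2 * ((2 * v) ^ (((k : ℝ) + 1) / 2) * (1 / 2) * Gamma ((k + 1) / 2))) := by
        rw [integral_comp_abs (f := fun x => x ^ k * rexp (-(2 * (v : ℝ))⁻¹ * x ^ 2)), half_line]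
    _ = (2 * v) ^ ((k : ℝ) / 2) * Gamma ((k + 1) / 2) / √π := by
        rw [add_div, rpow_add h2v, ← Real.sqrt_eq_rpow, show 2 * π * v = (2 * v) * π by ring,
          sqrt_mul h2v.le]
        have sqrt_two_v_pos : 0 < √(2 * (v : ℝ)) := sqrt_pos.2 h2v
        have sqrt_pi_pos : 0 < √π := sqrt_pos.2 pi_pos
        field_simp

lemma integral_abs_pow_gaussianReal_le {v : ℝ≥0} (hv : v ≠ 0) (k : ℕ) :
    ∫ x, |x| ^ k ∂gaussianReal 0 v ≤ (2 * v) ^ ((k : ℝ) / 2) * (⌈(k : ℝ) / 2⌉₊ ! : ℝ) := by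
  rw [integral_abs_pow_gaussianReal hv, div_le_iff₀ (sqrt_pos.2 pi_pos), mul_assoc]
  gcongr
  exact mul_comm (√π) _ ▸ Gamma_add_one_div_two_le k

end ProbabilityTheory

lemma Finset.prod_abs_pow_le_sum_mul_abs_pow {ι : Type*} (s : Finset ι) (α : ι → ℕ) (x : ι → ℝ)
    (hα : ∑ j ∈ s, α j ≠ 0) :
    ∏ j ∈ s, |x j| ^ α j ≤ ∑ j ∈ s, (α j / ∑ i ∈ s, α i : ℝ) * |x j| ^ ∑ i ∈ s, α i := by
  set S := ∑ i ∈ s, α i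
  have hS : (S : ℝ) ≠ 0 := by exact_mod_cast hα
  have weights_sum : ∑ j ∈ s, (α j / S : ℝ) = 1 := by
    rw [← Finset.sum_div, div_eq_one_iff_eq hS]; push_cast [S]; rfl
  calc ∏ j ∈ s, |x j| ^ α j = ∏ j ∈ s, (|x j| ^ S) ^ (α j / S : ℝ) := by
        refine Finset.prod_congr rfl fun j _ => ?_
        rw [← rpow_natCast _ S, ← rpow_mul (abs_nonneg _), mul_div_cancel₀ _ hS, rpow_natCast]
    _ ≤ _ := geom_mean_le_arith_mean_weighted s _ _ (fun j _ => by positivity) weights_sum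
          (fun j _ => by positivity)

lemma integral_prod_abs_pow_le_integral_abs_pow {ι : Type*} [Fintype ι] (μ : Measure ℝ)
    [IsProbabilityMeasure μ] (α : ι → ℕ)
    (hμ : Integrable (fun x : ℝ => |x| ^ ∑ j, α j) μ) :
    ∫ u : ι → ℝ, ∏ j, |u j| ^ α j ∂(Measure.pi fun _ => μ) ≤ ∫ x, |x| ^ ∑ j, α j ∂μ := by
  set S := ∑ j, α j
  by_cases hα : S = 0
  · have hα_zero : ∀ j, α j = 0 := fun j => Finset.sum_eq_zero_iff.1 hα j (Finset.mem_univ j)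
    simp [hα_zero, hα]
  have hint (j : ι) : Integrable (fun u : ι → ℝ => |u j| ^ S) (Measure.pi fun _ => μ) :=
    integrable_comp_eval (μ := fun _ => μ) (i := j) (f := fun x : ℝ => |x| ^ S) hμ
  calc ∫ u : ι → ℝ, ∏ j, |u j| ^ α j ∂(Measure.pi fun _ => μ)
      ≤ ∫ u : ι → ℝ, ∑ j, (α j / S : ℝ) * |u j| ^ S ∂(Measure.pi fun _ => μ) :=
        integral_mono_of_nonneg (ae_of_all _ fun u => by positivity)
          (integrable_finsetSum _ fun j _ => (hint j).const_mul _)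
          (ae_of_all _ fun u => Finset.univ.prod_abs_pow_le_sum_mul_abs_pow α u hα)
    _ = ∑ j, (α j / S : ℝ) * ∫ x, |x| ^ S ∂μ := by
        rw [integral_finsetSum _ fun j _ => (hint j).const_mul _]
        refine Finset.sum_congr rfl fun j _ => ?_
        rw [integral_const_mul, integral_comp_eval (μ := fun _ => μ) (i := j)
          (f := fun x : ℝ => |x| ^ S) hμ.aestronglyMeasurable]
    _ = ∫ x, |x| ^ S ∂μ := by
        rw [← Finset.sum_mul, ← Finset.sum_div, ← Nat.cast_sum, div_self (by exact_mod_cast hα),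
          one_mul]

theorem stmt_9_general (n d : ℕ) (α : Fin n → ℕ) (hdeg : ∑ j, α j ≤ d) :
    ∫ u : Fin n → ℝ, (∏ j, |u j| ^ α j)
        ∂(Measure.pi fun _ : Fin n => gaussianReal 0 1) ≤
      (2 : ℝ) ^ ((d : ℝ) / 2) * (Nat.factorial ⌈(d : ℝ) / 2⌉₊ : ℝ) := by
  have moment_le := integral_abs_pow_gaussianReal_le one_ne_zero (∑ j, α j)
  rw [NNReal.coe_one, mul_one] at moment_le
  calc _ ≤ ∫ x, |x| ^ ∑ j, α j ∂gaussianReal 0 1 :=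
        integral_prod_abs_pow_le_integral_abs_pow _ α (integrable_abs_pow_gaussianReal 0 1 _)
    _ ≤ _ := moment_le
    _ ≤ _ := monotone_rpow_half_mul_factorial_ceil_half one_le_two hdeg

/-- for an exponent vector `α` of total degree at most `d`, the expected
absolute value of the monomial `∏_j |u_j|^(α_j)` under the standard Gaussian product
measure is at most `2^(d/2) · ⌈d/2⌉!`. -/
theorem stmt_9 (n d : ℕ) (hn : 1 ≤ n) (α : Fin n → ℕ) (hdeg : ∑ j, α j ≤ d) :
    ∫ u : Fin n → ℝ, (∏ j, |u j| ^ α j)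
        ∂(Measure.pi fun _ : Fin n => gaussianReal 0 1) ≤
      (2 : ℝ) ^ ((d : ℝ) / 2) * (Nat.factorial ⌈(d : ℝ) / 2⌉₊ : ℝ) :=
  stmt_9_general n d α hdeg
end

section
/- Let n, k, d ≥ 1 be natural numbers with k ≥ 1, let γ ∈ (0,1), and let α : Fin n → ℕ be an exponent vector with ∑_{j∈Fin n} α_j ≤ d. Let μ be the n-fold product of the standard Gaussian measure N(0,1) on ℝ. Then μ{ u : ∏_{j∈Fin n} |u_j|^(α_j) ≥ 2^(d/2)·⌈d/2⌉! + √(k/γ)·2^(d/2)·√(d!) } ≤ γ/k, where 2^(d/2) denotes the real power. -/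
open MeasureTheory ProbabilityTheory Real
open scoped ENNReal

lemma gamma_half_le' (m : ℕ) : Real.Gamma ((m : ℝ) + 1/2) ≤ Real.sqrt π * m.factorial := by
  induction m with
  | zero => rw [show ((0:ℕ):ℝ) + 1/2 = 1/2 by norm_num, Real.Gamma_one_half_eq]; simp
  | succ m ih =>
    have h0 : (m:ℝ) + 1/2 ≠ 0 := by positivity
    have he : ((m+1 : ℕ):ℝ) + 1/2 = ((m:ℝ)+1/2) + 1 := by push_cast; ring
    rw [he, Real.Gamma_add_one h0]
    have hΓ : 0 ≤ Real.Gamma ((m:ℝ)+1/2) := (Real.Gamma_pos_of_pos (by positivity)).le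
    calc ((m:ℝ)+1/2) * Real.Gamma ((m:ℝ)+1/2) ≤ ((m:ℝ)+1) * (Real.sqrt π * m.factorial) := by
          apply mul_le_mul (by linarith) ih hΓ (by positivity)
      _ = Real.sqrt π * ((m+1 : ℕ).factorial) := by push_cast [Nat.factorial_succ]; ring

lemma gaussian_moment_le' (m : ℕ) :
    ∫⁻ x, ENNReal.ofReal (|x| ^ (2*m)) ∂(gaussianReal 0 1) ≤ ENNReal.ofReal (2^m * m.factorial) := by
  set h : ℝ → ℝ := fun x => (Real.sqrt (2*π))⁻¹ * (|x| ^ (2*m) * Real.exp (-(1/2) * x^2)) with hh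
  have habs : ∀ x : ℝ, |x| ^ (2*m) = x ^ (2*m) := fun x => (even_two_mul m).pow_abs x
  have hint2 : Integrable (fun x : ℝ => x ^ (2*m) * Real.exp (-(1/2) * x^2)) := by
    have h1 : (-1:ℝ) < ((2*m:ℕ):ℝ) := by
      have : (0:ℝ) ≤ ((2*m:ℕ):ℝ) := Nat.cast_nonneg _
      linarith
    have e : ∀ x:ℝ, x ^ ((2*m:ℕ):ℝ) = x ^ (2*m) := fun x => Real.rpow_natCast x (2*m)
    have := integrable_rpow_mul_exp_neg_mul_sq (b := (1/2:ℝ)) (by norm_num) h1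
    simpa only [e] using this
  have hint : Integrable h := by
    have : Integrable (fun x : ℝ => |x| ^ (2*m) * Real.exp (-(1/2) * x^2)) := by
      simpa [habs] using hint2
    exact this.const_mul _
  have hnn : ∀ x, 0 ≤ h x := fun x => by
    have := Real.sqrt_nonneg (2*π)
    positivity
  have hstep1 : ∫⁻ x, ENNReal.ofReal (|x| ^ (2*m)) ∂(gaussianReal 0 1)
      = ∫⁻ x, ENNReal.ofReal (h x) := by
    rw [gaussianReal_of_var_ne_zero 0 one_ne_zero,
      lintegral_withDensity_eq_lintegral_mul _ (measurable_gaussianPDF 0 1)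
        (by measurability)]
    congr 1
    ext x
    simp only [Pi.mul_apply, gaussianPDF]
    rw [← ENNReal.ofReal_mul (gaussianPDFReal_nonneg 0 1 x)]
    congr 1
    simp only [gaussianPDFReal, hh]
    push_cast
    ring_nf
  have hstep2 : ∫⁻ x, ENNReal.ofReal (h x) = ENNReal.ofReal (∫ x, h x) :=
    (ofReal_integral_eq_lintegral_ofReal hint (ae_of_all _ hnn)).symm
  have hval : ∫ x, h x = (2:ℝ)^m * Real.Gamma ((m:ℝ) + 1/2) / Real.sqrt π := by
    rw [hh]
    rw [integral_const_mul]
    have e1 : (fun x : ℝ => |x| ^ (2*m) * Real.exp (-(1/2) * x^2))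
        = fun x : ℝ => (fun t : ℝ => t ^ (2*m) * Real.exp (-(1/2) * t^2)) |x| := by
      funext x; simp [sq_abs]
    rw [show ∫ x : ℝ, |x| ^ (2*m) * Real.exp (-(1/2) * x^2)
        = ∫ x : ℝ, (fun t : ℝ => t ^ (2*m) * Real.exp (-(1/2) * t^2)) |x| from by rw [← e1]]
    rw [integral_comp_abs (f := fun t : ℝ => t ^ (2*m) * Real.exp (-(1/2) * t^2))]
    have h1 : (-1:ℝ) < ((2*m:ℕ):ℝ) := by
      have : (0:ℝ) ≤ ((2*m:ℕ):ℝ) := Nat.cast_nonneg _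
      linarith
    have key := integral_rpow_mul_exp_neg_mul_rpow (p := (2:ℝ)) (q := ((2*m:ℕ):ℝ))
      (b := (1/2:ℝ)) two_pos h1 one_half_pos
    have e2 : ∫ x in Set.Ioi (0:ℝ), x ^ (2*m) * Real.exp (-(1/2) * x^2)
        = ∫ x in Set.Ioi (0:ℝ), x ^ (((2*m:ℕ)):ℝ) * Real.exp (-(1/2) * x ^ (2:ℝ)) := by
      refine setIntegral_congr_fun measurableSet_Ioi (fun x hx => ?_)
      rw [Real.rpow_natCast, show (2:ℝ) = ((2:ℕ):ℝ) by norm_num, Real.rpow_natCast]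
    rw [e2, key]
    have hs2 : Real.sqrt 2 * Real.sqrt 2 = 2 := Real.mul_self_sqrt (by norm_num)
    have hsp : (0:ℝ) < Real.sqrt π := Real.sqrt_pos.mpr pi_pos
    have hs2p : (0:ℝ) < Real.sqrt 2 := Real.sqrt_pos.mpr (by norm_num)
    have hpow : ((1/2:ℝ)) ^ (-((((2*m:ℕ)):ℝ)+1)/2) = 2^(m:ℝ) * Real.sqrt 2 := by
      rw [show (-((((2*m:ℕ)):ℝ)+1)/2) = -(((((2*m:ℕ)):ℝ)+1)/2) by ring,
        Real.rpow_neg (by norm_num), one_div, Real.inv_rpow (by norm_num : (0:ℝ) ≤ 2),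
        inv_inv, show (((((2*m:ℕ)):ℝ)+1)/2) = (m:ℝ) + 1/2 by push_cast; ring,
        Real.rpow_add (by norm_num : (0:ℝ) < 2), Real.rpow_natCast]
      congr 1
      rw [Real.sqrt_eq_rpow]
    rw [hpow]
    have e3 : Real.sqrt (2*π) = Real.sqrt 2 * Real.sqrt π := Real.sqrt_mul (by norm_num) _
    rw [e3, Real.rpow_natCast, show (((((2*m:ℕ)):ℝ)+1)/2) = (m:ℝ) + 1/2 by push_cast; ring]
    field_simp
  rw [hstep1, hstep2, hval]
  apply ENNReal.ofReal_le_ofReal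
  have hsp : (0:ℝ) < Real.sqrt π := Real.sqrt_pos.mpr pi_pos
  rw [div_le_iff₀ hsp]
  have hg := gamma_half_le' m
  nlinarith [pow_pos (show (0:ℝ)<2 by norm_num) m]

lemma lintegral_pi_prod' {μ : Measure ℝ} [SigmaFinite μ] :
    ∀ (n : ℕ) (f : Fin n → ℝ → ℝ≥0∞), (∀ i, Measurable (f i)) →
    ∫⁻ x : Fin n → ℝ, ∏ i, f i (x i) ∂(Measure.pi fun _ => μ) = ∏ i, ∫⁻ x, f i x ∂μ := by
  intro n
  induction n with
  | zero =>
    intro f hf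
    simp [lintegral_const]
  | succ n ih =>
    intro f hf
    have hmeas : Measurable fun x : Fin (n+1) → ℝ => ∏ i, f i (x i) :=
      Finset.measurable_prod _ fun i _ => (hf i).comp (measurable_pi_apply i)
    rw [← ((measurePreserving_piFinSuccAbove (fun _ : Fin (n+1) => μ) 0).symm).lintegral_comp
      hmeas]
    simp_rw [MeasurableEquiv.piFinSuccAbove_symm_apply, Fin.insertNthEquiv,
      Fin.prod_univ_succ, Fin.insertNth_zero]
    simp only [Equiv.coe_fn_mk, Fin.cons_zero, Fin.cons_succ, cast_eq]
    rw [lintegral_prod_mul (f := f 0) (g := fun y : Fin n → ℝ => ∏ i, f i.succ (y i))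
      ((hf 0).aemeasurable)
      ((show Measurable fun y : Fin n → ℝ => ∏ i, f i.succ (y i) by
        exact Finset.measurable_prod Finset.univ (fun (i : Fin n) _ =>
          (hf i.succ).comp (measurable_pi_apply i))).aemeasurable)]
    rw [ih (fun i => f i.succ) (fun i => hf i.succ)]

/-- Chebyshev-type tail bound for a monomial of total degree at most `d`
evaluated at a standard Gaussian vector. -/
theorem stmt_12 (n k d : ℕ) (hn : 1 ≤ n) (hk : 1 ≤ k) (hd : 1 ≤ d)
    (γ : ℝ) (hγ : γ ∈ Set.Ioo (0 : ℝ) 1)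
    (α : Fin n → ℕ) (hdeg : ∑ j, α j ≤ d) :
    (Measure.pi fun _ : Fin n => gaussianReal 0 1)
        {u | (2 : ℝ) ^ ((d : ℝ) / 2) * (Nat.factorial ⌈(d : ℝ) / 2⌉₊ : ℝ) +
              Real.sqrt ((k : ℝ) / γ) * (2 : ℝ) ^ ((d : ℝ) / 2) *
                Real.sqrt (Nat.factorial d) ≤
            ∏ j, |u j| ^ α j} ≤ ENNReal.ofReal (γ / k) := by
  obtain ⟨hγ0, hγ1⟩ := hγ
  have hk0 : (0:ℝ) < k := by exact_mod_cast hk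
  set M : ℝ := (2 : ℝ) ^ ((d : ℝ) / 2) * (Nat.factorial ⌈(d : ℝ) / 2⌉₊ : ℝ) with hM
  set t : ℝ := Real.sqrt ((k : ℝ) / γ) * (2 : ℝ) ^ ((d : ℝ) / 2) * Real.sqrt (Nat.factorial d)
    with hT
  set c : ℝ := M + t with hc
  have hrp : (0:ℝ) < (2 : ℝ) ^ ((d : ℝ) / 2) := Real.rpow_pos_of_pos (by norm_num) _
  have hfac : (0:ℝ) < (Nat.factorial d : ℝ) := by exact_mod_cast d.factorial_pos
  have ht : 0 < t := by
    apply mul_pos (mul_pos _ hrp) (Real.sqrt_pos.mpr hfac)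
    exact Real.sqrt_pos.mpr (div_pos hk0 hγ0)
  have hM0 : 0 ≤ M := by positivity
  have hc0 : 0 < c := by linarith
  set V : ℝ := (2:ℝ)^d * (Nat.factorial d : ℝ) with hV
  have hV0 : (0:ℝ) < V := by positivity
  -- t^2 = (k/γ) * V
  have hrp2 : ((2:ℝ) ^ ((d : ℝ) / 2))^2 = (2:ℝ)^d := by
    rw [← Real.rpow_natCast ((2:ℝ)^((d:ℝ)/2)) 2, ← Real.rpow_mul (by norm_num),
      show (d:ℝ)/2 * ((2:ℕ):ℝ) = ((d:ℕ):ℝ) by push_cast; ring, Real.rpow_natCast]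
  have ht2 : t^2 = ((k:ℝ)/γ) * V := by
    rw [hT, mul_pow, mul_pow, hrp2, Real.sq_sqrt (div_nonneg hk0.le hγ0.le),
      Real.sq_sqrt hfac.le, hV]
    ring
  -- the functions
  set F : Fin n → ℝ → ℝ≥0∞ := fun j x => ENNReal.ofReal (|x| ^ (2 * α j)) with hF
  have hFmeas : ∀ j, Measurable (F j) := fun j =>
    ((continuous_abs.pow (2 * α j)).measurable).ennreal_ofReal
  set f : (Fin n → ℝ) → ℝ≥0∞ := fun u => ∏ j, F j (u j) with hf
  have hfmeas : Measurable f :=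
    Finset.measurable_prod _ fun j _ => (hFmeas j).comp (measurable_pi_apply j)
  have hfval : ∀ u : Fin n → ℝ, f u = ENNReal.ofReal ((∏ j, |u j| ^ α j)^2) := by
    intro u
    rw [hf]
    simp only [hF]
    rw [← ENNReal.ofReal_prod_of_nonneg (fun j _ => by positivity)]
    congr 1
    rw [← Finset.prod_pow]
    exact Finset.prod_congr rfl fun j _ => by rw [← pow_mul, mul_comm]
  -- inclusion
  have hsub : {u : Fin n → ℝ | c ≤ ∏ j, |u j| ^ α j}
      ⊆ {u : Fin n → ℝ | ENNReal.ofReal (c^2) ≤ f u} := by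
    intro u hu
    simp only [Set.mem_setOf_eq] at hu ⊢
    rw [hfval u]
    exact ENNReal.ofReal_le_ofReal (pow_le_pow_left₀ hc0.le hu 2)
  -- moment bound on the lintegral
  have hnat : (∏ j, 2^(α j) * (α j).factorial) ≤ 2^d * d.factorial := by
    rw [Finset.prod_mul_distrib, Finset.prod_pow_eq_pow_sum]
    exact Nat.mul_le_mul (Nat.pow_le_pow_right (by norm_num) hdeg)
      (Nat.le_of_dvd d.factorial_pos
        ((Nat.prod_factorial_dvd_factorial_sum _ _).trans
          (Nat.factorial_dvd_factorial hdeg)))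
  have hlint : ∫⁻ u, f u ∂(Measure.pi fun _ : Fin n => gaussianReal 0 1)
      ≤ ENNReal.ofReal V := by
    rw [hf, lintegral_pi_prod' n F hFmeas]
    calc ∏ j, ∫⁻ x, F j x ∂(gaussianReal 0 1)
        ≤ ∏ j, ENNReal.ofReal (2^(α j) * (α j).factorial) :=
          Finset.prod_le_prod' fun j _ => gaussian_moment_le' (α j)
      _ = ENNReal.ofReal (∏ j, ((2:ℝ)^(α j) * ((α j).factorial : ℝ))) := by
          rw [ENNReal.ofReal_prod_of_nonneg (fun j _ => by positivity)]
      _ ≤ ENNReal.ofReal V := by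
          apply ENNReal.ofReal_le_ofReal
          rw [hV]
          calc (∏ j, ((2:ℝ)^(α j) * ((α j).factorial : ℝ)))
              = ((∏ j, 2^(α j) * (α j).factorial : ℕ) : ℝ) := by push_cast; rfl
            _ ≤ ((2^d * d.factorial : ℕ) : ℝ) := by exact_mod_cast hnat
            _ = (2:ℝ)^d * (Nat.factorial d : ℝ) := by push_cast; rfl
  -- Markov
  have hmarkov : (Measure.pi fun _ : Fin n => gaussianReal 0 1)
      {u : Fin n → ℝ | ENNReal.ofReal (c^2) ≤ f u}
      ≤ (∫⁻ u, f u ∂(Measure.pi fun _ : Fin n => gaussianReal 0 1)) / ENNReal.ofReal (c^2) :=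
    meas_ge_le_lintegral_div hfmeas.aemeasurable
      (by simp [ENNReal.ofReal_pos.mpr (by positivity : (0:ℝ) < c^2), ne_of_gt])
      ENNReal.ofReal_ne_top
  refine le_trans (measure_mono hsub) (le_trans hmarkov ?_)
  calc (∫⁻ u, f u ∂(Measure.pi fun _ : Fin n => gaussianReal 0 1)) / ENNReal.ofReal (c^2)
      ≤ ENNReal.ofReal V / ENNReal.ofReal (c^2) :=
        ENNReal.div_le_div_right hlint _
    _ = ENNReal.ofReal (V / c^2) :=
        (ENNReal.ofReal_div_of_pos (by positivity : (0:ℝ) < c^2)).symm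
    _ ≤ ENNReal.ofReal (γ / k) := by
        apply ENNReal.ofReal_le_ofReal
        rw [div_le_div_iff₀ (by positivity) hk0]
        have hct : t^2 ≤ c^2 := pow_le_pow_left₀ ht.le (by linarith) 2
        have hγt : γ * t^2 = (k:ℝ) * V := by
          rw [ht2]; field_simp
        nlinarith
end

section
/- Let n, k ≥ 1 be natural numbers, let a : Fin k → ℝ, let α : Fin k → (Fin n → ℕ), and define the k-sparse polynomial f : (Fin n → ℝ) → ℝ by f(x) = ∑_{i∈Fin k} a_i · ∏_j (x_j)^(α_i(j)). Let η ≥ 0 and let f̃ : (Fin n → ℝ) → ℝ satisfy |f̃(x) − f(x)| ≤ η for every x. Then for every u ∈ (Fin n → ℝ), the (k+1)-dimensional Hankel matrix H̃ = H_{k+1}(f̃,u) has smallest singular value at most η·(k+1); that is, there exists a nonzero vector v ∈ ℝ^(k+1) with ‖H̃ · v‖₂ ≤ η·(k+1)·‖v‖₂. -/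
/-- if `f` is a `k`-sparse polynomial and `f̃` is an `η`-approximate
oracle for `f`, then the `(k+1)`-dimensional Hankel matrix of `f̃` at any point `u`
has smallest singular value at most `η(k+1)`: there is a nonzero `v` with
`‖H̃ v‖₂ ≤ η(k+1)‖v‖₂`. -/
theorem stmt_13 (n k : ℕ) (hn : 1 ≤ n) (hk : 1 ≤ k)
    (a : Fin k → ℝ) (α : Fin k → Fin n → ℕ)
    (f : (Fin n → ℝ) → ℝ)
    (hf : ∀ x, f x = ∑ i, a i * ∏ j, x j ^ α i j)
    (η : ℝ) (hη : 0 ≤ η)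
    (ftil : (Fin n → ℝ) → ℝ) (happrox : ∀ x, |ftil x - f x| ≤ η)
    (u : Fin n → ℝ) :
    ∃ v : Fin (k + 1) → ℝ, v ≠ 0 ∧
      Real.sqrt (∑ i, ((hankel (k + 1) ftil u).mulVec v i) ^ 2) ≤
        η * (k + 1) * Real.sqrt (∑ i, v i ^ 2) := by
  set c : Fin k → ℝ := fun s => ∏ l, u l ^ α s l with hc
  set W : Matrix (Fin k) (Fin (k + 1)) ℝ := Matrix.of fun s j => c s ^ (j : ℕ) with hW
  -- a nonzero kernel vector of W
  have hker : ∃ v : Fin (k + 1) → ℝ, v ≠ 0 ∧ W.mulVec v = 0 := by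
    by_contra h
    push_neg at h
    have hinj : Function.Injective W.mulVecLin := by
      rw [← LinearMap.ker_eq_bot, LinearMap.ker_eq_bot']
      intro v hv
      by_contra hv0
      exact absurd hv (h v hv0)
    have := LinearMap.finrank_le_finrank_of_injective hinj
    simp [Module.finrank_fin_fun] at this
  obtain ⟨v, hv0, hWv⟩ := hker
  refine ⟨v, hv0, ?_⟩
  have hWv' : ∀ s : Fin k, ∑ j : Fin (k + 1), c s ^ (j : ℕ) * v j = 0 := by
    intro s
    have := congrFun hWv s
    simpa [Matrix.mulVec, dotProduct, hW] using this
  -- the exact Hankel matrix kills v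
  have hHf : ∀ i : Fin (k + 1),
      ∑ j : Fin (k + 1), f (fun l => u l ^ ((i : ℕ) + (j : ℕ))) * v j = 0 := by
    intro i
    have hfe : ∀ j : Fin (k + 1), f (fun l => u l ^ ((i : ℕ) + (j : ℕ))) =
        ∑ s, a s * (c s ^ (i : ℕ) * c s ^ (j : ℕ)) := by
      intro j
      rw [hf]
      refine Finset.sum_congr rfl fun s _ => ?_
      congr 1
      rw [← pow_add, hc, ← Finset.prod_pow]
      exact Finset.prod_congr rfl fun l _ => pow_right_comm _ _ _
    calc ∑ j : Fin (k + 1), f (fun l => u l ^ ((i : ℕ) + (j : ℕ))) * v j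
        = ∑ j : Fin (k + 1), ∑ s, a s * c s ^ (i : ℕ) * (c s ^ (j : ℕ) * v j) := by
          refine Finset.sum_congr rfl fun j _ => ?_
          rw [hfe j, Finset.sum_mul]
          exact Finset.sum_congr rfl fun s _ => by ring
      _ = ∑ s, a s * c s ^ (i : ℕ) * ∑ j : Fin (k + 1), c s ^ (j : ℕ) * v j := by
          rw [Finset.sum_comm]
          exact Finset.sum_congr rfl fun s _ => (Finset.mul_sum _ _ _).symm
      _ = 0 := by simp [hWv']
  set S := ∑ j : Fin (k + 1), |v j| with hS
  have hSnn : 0 ≤ S := Finset.sum_nonneg fun j _ => abs_nonneg _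
  have hbound : ∀ i : Fin (k + 1), |(hankel (k + 1) ftil u).mulVec v i| ≤ η * S := by
    intro i
    have heq : ∑ j : Fin (k + 1),
        (ftil (fun l => u l ^ ((i : ℕ) + (j : ℕ))) -
          f (fun l => u l ^ ((i : ℕ) + (j : ℕ)))) * v j =
        (hankel (k + 1) ftil u).mulVec v i := by
      simp only [sub_mul, Finset.sum_sub_distrib, hHf i, sub_zero]
      rfl
    rw [← heq]
    calc |∑ j : Fin (k + 1),
        (ftil (fun l => u l ^ ((i : ℕ) + (j : ℕ))) -
          f (fun l => u l ^ ((i : ℕ) + (j : ℕ)))) * v j|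
        ≤ ∑ j : Fin (k + 1),
            |(ftil (fun l => u l ^ ((i : ℕ) + (j : ℕ))) -
              f (fun l => u l ^ ((i : ℕ) + (j : ℕ)))) * v j| :=
          Finset.abs_sum_le_sum_abs _ _
      _ ≤ ∑ j : Fin (k + 1), η * |v j| := by
          refine Finset.sum_le_sum fun j _ => ?_
          rw [abs_mul]
          exact mul_le_mul_of_nonneg_right (happrox _) (abs_nonneg _)
      _ = η * S := (Finset.mul_sum _ _ _).symm
  have hS2 : S ^ 2 ≤ (k + 1) * ∑ j, v j ^ 2 := by
    have := Finset.sum_mul_sq_le_sq_mul_sq Finset.univ (fun _ : Fin (k + 1) => (1 : ℝ))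
      (fun j => |v j|)
    simpa [hS, sq_abs] using this
  have hmain : ∑ i, ((hankel (k + 1) ftil u).mulVec v i) ^ 2 ≤
      (η * (k + 1)) ^ 2 * ∑ j, v j ^ 2 := by
    calc ∑ i, ((hankel (k + 1) ftil u).mulVec v i) ^ 2
        ≤ ∑ _i : Fin (k + 1), (η * S) ^ 2 := by
          refine Finset.sum_le_sum fun i _ => ?_
          rw [← sq_abs]
          exact pow_le_pow_left₀ (abs_nonneg _) (hbound i) 2
      _ = (k + 1) * (η ^ 2 * S ^ 2) := by
          rw [Finset.sum_const, Finset.card_univ, Fintype.card_fin, nsmul_eq_mul]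
          push_cast; ring
      _ ≤ (k + 1) * (η ^ 2 * ((k + 1) * ∑ j, v j ^ 2)) := by
          refine mul_le_mul_of_nonneg_left
            (mul_le_mul_of_nonneg_left hS2 (sq_nonneg η)) (by positivity)
      _ = (η * (k + 1)) ^ 2 * ∑ j, v j ^ 2 := by push_cast; ring
  have h1 : Real.sqrt (∑ i, ((hankel (k + 1) ftil u).mulVec v i) ^ 2) ≤
      Real.sqrt ((η * (k + 1)) ^ 2 * ∑ j, v j ^ 2) := Real.sqrt_le_sqrt hmain
  rwa [Real.sqrt_mul (sq_nonneg _), Real.sqrt_sq (by positivity)] at h1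
end

section
/- Let n and k be natural numbers, let μ be a Borel probability measure on (Fin n → ℝ), let f : (Fin n → ℝ) → ℝ be measurable, and let ε ∈ [0,∞]. Suppose that for every k-junta g : (Fin n → ℝ) → ℝ, the lower Lebesgue integral ∫⁻ |f(y) − g(y)| dμ(y) is at least ε (i.e., f is ε-far in ℓ₁-distance from every k-junta). Then for every set S ⊆ Fin n with |S| ≤ k, the influence of the complement satisfies Infl_f(Fin n ∖ S) = ∫⁻∫⁻ |f(y) − f(x_{S̄} y_S)| dμ(x) dμ(y) ≥ ε, where x_{S̄} y_S denotes the vector whose i-th coordinate is y_i if i ∈ S and x_i otherwise. -/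
open MeasureTheory ENNReal

/-- `g : ℝⁿ → ℝ` is a `k`-junta if its value depends on at most `k` coordinates. -/
def IsJunta (n k : ℕ) (g : (Fin n → ℝ) → ℝ) : Prop :=
  ∃ S : Finset (Fin n), S.card ≤ k ∧
    ∀ y z : Fin n → ℝ, (∀ i ∈ S, y i = z i) → g y = g z

open Classical in
/-- The influence of `f` over a set `T` of coordinates, w.r.t. the measure `μ`:
`Infl_f(T) = ∫⁻∫⁻ |f(y) − f(x_T y_{T̄})| dμ(x) dμ(y)`, where `x_T y_{T̄}` takes the
`x`-coordinate on `T` and the `y`-coordinate elsewhere. -/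
noncomputable def influence {n : ℕ} (μ : Measure (Fin n → ℝ))
    (f : (Fin n → ℝ) → ℝ) (T : Set (Fin n)) : ℝ≥0∞ :=
  ∫⁻ y, ∫⁻ x, ENNReal.ofReal |f y - f (fun i => if i ∈ T then x i else y i)| ∂μ ∂μ

/-! For each fixed `x`, the hybrid `y ↦ f (x_{S̄} y_S)` is a `k`-junta, hence `ε`-far from `f`;
averaging this over `x` (Tonelli) is exactly the influence of `S̄`. -/

theorem Measurable.pi_piecewise {α ι : Type*} {X : ι → Type*} [MeasurableSpace α]
    [∀ i, MeasurableSpace (X i)] {T : Set ι} [∀ i, Decidable (i ∈ T)]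
    {g h : α → ∀ i, X i} (hg : Measurable g) (hh : Measurable h) :
    Measurable fun a => T.piecewise (g a) (h a) :=
  measurable_pi_lambda _ fun i => by
    by_cases hi : i ∈ T
    · simpa [hi] using hg.eval
    · simpa [hi] using hh.eval

theorem isJunta_comp_piecewise {n k : ℕ} (f : (Fin n → ℝ) → ℝ) {S : Finset (Fin n)}
    (hS : S.card ≤ k) {T : Set (Fin n)} {_ : ∀ i, Decidable (i ∈ T)} (hT : Tᶜ ⊆ S)
    (x : Fin n → ℝ) : IsJunta n k fun y => f (T.piecewise x y) := by
  refine ⟨S, hS, fun y z hyz => congrArg f (funext fun i => ?_)⟩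
  by_cases hi : i ∈ T
  · simp [hi]
  · simp [hi, hyz i (hT hi)]

-- `influence` is defined with the classical decidability instance, so `T.piecewise` must use it too.
open Classical in
theorem le_influence_of_forall_le_lintegral {n : ℕ} {μ : Measure (Fin n → ℝ)}
    [IsProbabilityMeasure μ] {f : (Fin n → ℝ) → ℝ} (hf : Measurable f) {T : Set (Fin n)}
    {ε : ℝ≥0∞} (h : ∀ x, ε ≤ ∫⁻ y, ENNReal.ofReal |f y - f (T.piecewise x y)| ∂μ) :
    ε ≤ influence μ f T := by
  have hmeas : Measurable fun p : (Fin n → ℝ) × (Fin n → ℝ) =>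
      ENNReal.ofReal |f p.2 - f (T.piecewise p.1 p.2)| :=
    ENNReal.measurable_ofReal.comp <|
      ((hf.comp measurable_snd).sub (hf.comp (measurable_fst.pi_piecewise measurable_snd))).abs
  calc ε = ∫⁻ _, ε ∂μ := by simp
    _ ≤ ∫⁻ x, ∫⁻ y, ENNReal.ofReal |f y - f (T.piecewise x y)| ∂μ ∂μ := lintegral_mono h
    _ = influence μ f T := lintegral_lintegral_swap hmeas.aemeasurable

/-- if `f` is `ε`-far in `ℓ₁`-distance from every `k`-junta, then for
every set `S` of at most `k` coordinates, the influence of the complement of `S` is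
at least `ε`. -/
theorem stmt_15 (n k : ℕ) (μ : Measure (Fin n → ℝ)) [IsProbabilityMeasure μ]
    (f : (Fin n → ℝ) → ℝ) (hf : Measurable f) (ε : ℝ≥0∞)
    (hfar : ∀ g : (Fin n → ℝ) → ℝ, IsJunta n k g →
      ε ≤ ∫⁻ y, ENNReal.ofReal |f y - g y| ∂μ) :
    ∀ S : Finset (Fin n), S.card ≤ k →
      ε ≤ influence μ f {i | i ∉ S} := by
  intro S hS
  exact le_influence_of_forall_le_lintegral hf fun x =>
    hfar _ (isJunta_comp_piecewise f hS (fun i hi => not_not.mp hi) x)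
end

section
/- Let n be a natural number, let ν_i (i ∈ Fin n) be Borel probability measures on ℝ, and let μ = ⨂_{i∈Fin n} ν_i be their product measure on (Fin n → ℝ). Let f : (Fin n → ℝ) → ℝ be measurable and let S, T ⊆ Fin n. Then the influence is sub-additive in the following sense: Infl_f(S ∪ T) ≤ Infl_f(S) + Infl_f(T ∖ S). In particular, if S and T are disjoint, then Infl_f(S ∪ T) ≤ Infl_f(S) + Infl_f(T). -/
open MeasureTheory ENNReal

open Classical in
/-- Helper: take `x = p.2` on `U` and `y = p.1` elsewhere. -/
noncomputable def mixFn {n : ℕ} (U : Set (Fin n)) (p : (Fin n → ℝ) × (Fin n → ℝ)) :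
    Fin n → ℝ :=
  fun i => if i ∈ U then p.2 i else p.1 i

lemma mixFn_measurable {n : ℕ} (U : Set (Fin n)) : Measurable (mixFn U) := by
  refine measurable_pi_iff.mpr fun i => ?_
  unfold mixFn
  by_cases h : i ∈ U <;> simp only [h, if_true, if_false]
  · exact (measurable_pi_apply i).comp measurable_snd
  · exact (measurable_pi_apply i).comp measurable_fst

open Classical in
/-- Ψ: swap coordinates in `S` between the two components; measure preserving for `μ × μ`. -/
theorem psi_mp {n : ℕ} (ν : Fin n → Measure ℝ) [∀ i, IsProbabilityMeasure (ν i)]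
    (S : Set (Fin n)) :
    MeasurePreserving (fun p : (Fin n → ℝ) × (Fin n → ℝ) =>
      ((fun i => if i ∈ S then p.2 i else p.1 i : Fin n → ℝ),
       (fun i => if i ∈ S then p.1 i else p.2 i : Fin n → ℝ)))
      ((Measure.pi ν).prod (Measure.pi ν)) ((Measure.pi ν).prod (Measure.pi ν)) := by
  have h1 : MeasurePreserving (MeasurableEquiv.arrowProdEquivProdArrow ℝ ℝ (Fin n))
      (Measure.pi fun i => (ν i).prod (ν i)) ((Measure.pi ν).prod (Measure.pi ν)) :=
    measurePreserving_arrowProdEquivProdArrow ℝ ℝ (Fin n) ν ν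
  have h2 : MeasurePreserving
      (fun (g : Fin n → ℝ × ℝ) (i : Fin n) => if i ∈ S then Prod.swap (g i) else g i)
      (Measure.pi fun i => (ν i).prod (ν i)) (Measure.pi fun i => (ν i).prod (ν i)) := by
    refine measurePreserving_pi (fun i => (ν i).prod (ν i)) (fun i => (ν i).prod (ν i))
      (f := fun i (a : ℝ × ℝ) => if i ∈ S then a.swap else a) (fun i => ?_)
    by_cases h : i ∈ S <;> simp only [h, if_true, if_false]
    · exact Measure.measurePreserving_swap
    · exact MeasurePreserving.id _
  have hc := h1.comp (h2.comp h1.symm)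
  convert hc using 1
  funext p
  simp only [Function.comp_apply, MeasurableEquiv.arrowProdEquivProdArrow,
    Equiv.arrowProdEquivProdArrow, MeasurableEquiv.symm_mk, MeasurableEquiv.coe_mk,
    Equiv.coe_fn_mk, Equiv.coe_fn_symm_mk]
  refine Prod.ext ?_ ?_ <;> funext i <;> by_cases h : i ∈ S <;> simp [h]

open Classical in
/-- sub-additivity of influence over a product measure:
`Infl_f(S ∪ T) ≤ Infl_f(S) + Infl_f(T \ S)`; in particular, for disjoint `S` and `T`,
`Infl_f(S ∪ T) ≤ Infl_f(S) + Infl_f(T)`. -/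
theorem stmt_16 (n : ℕ) (ν : Fin n → Measure ℝ)
    [∀ i, IsProbabilityMeasure (ν i)]
    (f : (Fin n → ℝ) → ℝ) (hf : Measurable f) (S T : Set (Fin n)) :
    influence (Measure.pi ν) f (S ∪ T) ≤
        influence (Measure.pi ν) f S + influence (Measure.pi ν) f (T \ S) ∧
      (Disjoint S T →
        influence (Measure.pi ν) f (S ∪ T) ≤
          influence (Measure.pi ν) f S + influence (Measure.pi ν) f T) := by
  set μ := Measure.pi ν with hμ
  have hF : ∀ (U : Set (Fin n)), Measurable (fun p : (Fin n → ℝ) × (Fin n → ℝ) =>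
      ENNReal.ofReal |f p.1 - f (mixFn U p)|) := fun U =>
    ENNReal.measurable_ofReal.comp
      (((hf.comp measurable_fst).sub (hf.comp (mixFn_measurable U))).abs)
  have hinfl : ∀ (U : Set (Fin n)), influence μ f U =
      ∫⁻ p : (Fin n → ℝ) × (Fin n → ℝ),
        ENNReal.ofReal |f p.1 - f (mixFn U p)| ∂(μ.prod μ) := by
    intro U
    rw [influence, lintegral_prod _ (hF U).aemeasurable]
    rfl
  have key : influence μ f (S ∪ T) ≤ influence μ f S + influence μ f (T \ S) := by
    rw [hinfl, hinfl, hinfl]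
    have hΨ := psi_mp ν S
    rw [← hμ] at hΨ
    have hswap : (∫⁻ p : (Fin n → ℝ) × (Fin n → ℝ),
          ENNReal.ofReal |f (mixFn S p) - f (mixFn (S ∪ T) p)| ∂μ.prod μ)
        = ∫⁻ p : (Fin n → ℝ) × (Fin n → ℝ),
          ENNReal.ofReal |f p.1 - f (mixFn (T \ S) p)| ∂μ.prod μ := by
      refine Eq.trans ?_ (hΨ.lintegral_comp (hF (T \ S)))
      refine lintegral_congr fun p => ?_
      have h2 : mixFn (S ∪ T) p
          = mixFn (T \ S) (mixFn S p, fun i => if i ∈ S then p.1 i else p.2 i) := by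
        funext i
        simp only [mixFn]
        by_cases hS : i ∈ S <;> by_cases hT : i ∈ T <;> simp [hS, hT]
      rw [h2]
      rfl
    calc (∫⁻ p : (Fin n → ℝ) × (Fin n → ℝ),
          ENNReal.ofReal |f p.1 - f (mixFn (S ∪ T) p)| ∂μ.prod μ)
        ≤ ∫⁻ p : (Fin n → ℝ) × (Fin n → ℝ),
            (ENNReal.ofReal |f p.1 - f (mixFn S p)|
            + ENNReal.ofReal |f (mixFn S p) - f (mixFn (S ∪ T) p)|) ∂μ.prod μ :=
          lintegral_mono fun p => (ENNReal.ofReal_le_ofReal (abs_sub_le _ _ _)).trans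
            (le_of_eq (ENNReal.ofReal_add (abs_nonneg _) (abs_nonneg _)))
      _ = (∫⁻ p : (Fin n → ℝ) × (Fin n → ℝ),
            ENNReal.ofReal |f p.1 - f (mixFn S p)| ∂μ.prod μ)
          + ∫⁻ p : (Fin n → ℝ) × (Fin n → ℝ),
            ENNReal.ofReal |f (mixFn S p) - f (mixFn (S ∪ T) p)| ∂μ.prod μ :=
          lintegral_add_left (hF S) _
      _ = _ := by rw [hswap]
  refine ⟨key, fun hd => ?_⟩
  have hTS : T \ S = T :=
    Set.ext fun x => ⟨fun h => h.1, fun h => ⟨h, fun hS => hd.ne_of_mem hS h rfl⟩⟩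
  rw [hTS] at key
  exact key
end

section
/- Let n and k be natural numbers with n ≥ 2k+2, and let c, a : Fin n → ℝ be coefficient vectors taking values in {0,1} such that the set {i : c_i = 1} has exactly 2k+2 elements and the set {i : a_i = 1} has at most 2k elements. Let μ be the n-fold product of the standard Gaussian measure N(0,1) on ℝ. Then μ{ x : |∑_{i∈Fin n} (c_i − a_i)·x_i| ≤ 1/4 } ≤ 1/3, and consequently ∫ |∑_{i∈Fin n} c_i·x_i − ∑_{i∈Fin n} a_i·x_i| dμ(x) ≥ 1/6. -/
open MeasureTheory ProbabilityTheory Real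
open scoped NNReal ENNReal

/-! Since `c` has more ones than `a`, some coordinate `j` has `c j - a j = 1`. Conditioning on the
other coordinates (Fubini), `∑ (c i - a i) x i` is `x j` plus an independent shift, and a standard
Gaussian puts mass at most `(1/2) / √(2π) ≤ 1/3` on any interval of length `1/2`. Hence
`|f₁ - f₂| ≥ 1/4` with probability at least `2/3`, and the integral is at least `1/6`. -/

lemma gaussianPDFReal_le_inv_sqrt (μ : ℝ) (v : ℝ≥0) (x : ℝ) :
    gaussianPDFReal μ v x ≤ (√(2 * π * v))⁻¹ := by
  rw [gaussianPDFReal]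
  refine mul_le_of_le_one_right (by positivity) (Real.exp_le_one_iff.mpr ?_)
  exact div_nonpos_of_nonpos_of_nonneg (neg_nonpos.mpr (sq_nonneg _)) (by positivity)

lemma gaussianReal_le_mul_volume (μ : ℝ) {v : ℝ≥0} (hv : v ≠ 0) (s : Set ℝ) :
    gaussianReal μ v s ≤ ENNReal.ofReal (√(2 * π * v))⁻¹ * volume s := by
  rw [gaussianReal_apply μ hv, ← setLIntegral_const]
  exact lintegral_mono fun x => ENNReal.ofReal_le_ofReal (gaussianPDFReal_le_inv_sqrt μ v x)

lemma gaussianReal_abs_add_le_quarter (t : ℝ) :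
    gaussianReal 0 1 {y | |y + t| ≤ 1 / 4} ≤ ENNReal.ofReal (1 / 3) := by
  have hs : {y : ℝ | |y + t| ≤ 1 / 4} = Set.Icc (-t - 1 / 4) (-t + 1 / 4) := by
    ext y
    simp only [Set.mem_ofPred_eq, Set.mem_Icc, abs_le]
    constructor <;> rintro ⟨h1, h2⟩ <;> constructor <;> linarith
  have hsqrt : 3 / 2 ≤ √(2 * π) :=
    Real.le_sqrt_of_sq_le (by nlinarith [Real.pi_gt_three])
  refine (gaussianReal_le_mul_volume 0 one_ne_zero _).trans ?_
  rw [hs, Real.volume_Icc, ← ENNReal.ofReal_mul (by positivity)]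
  refine ENNReal.ofReal_le_ofReal ?_
  rw [NNReal.coe_one, mul_one, show -t + 1 / 4 - (-t - 1 / 4) = (1 / 2 : ℝ) by ring]
  have := inv_anti₀ (by norm_num) hsqrt
  linarith

lemma measure_pi_sum_mul_mem_le {m : ℕ} (μ : Fin (m + 1) → Measure ℝ)
    [∀ i, IsProbabilityMeasure (μ i)]
    (d : Fin (m + 1) → ℝ) {j : Fin (m + 1)} (hdj : d j = 1) {s : Set ℝ} (hs : MeasurableSet s)
    {ε : ℝ≥0∞} (hε : ∀ t, μ j {y | y + t ∈ s} ≤ ε) :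
    Measure.pi μ {x | ∑ i, d i * x i ∈ s} ≤ ε := by
  set B : Set (ℝ × (Fin m → ℝ)) := {p | p.1 + ∑ i, d (j.succAbove i) * p.2 i ∈ s}
  have hB : MeasurableSet B := hs.preimage (by fun_prop)
  have hpre : {x : Fin (m + 1) → ℝ | ∑ i, d i * x i ∈ s}
      = MeasurableEquiv.piFinSuccAbove (fun _ => ℝ) j ⁻¹' B := by
    ext x
    simp only [Set.mem_ofPred_eq, Set.mem_preimage, B, MeasurableEquiv.piFinSuccAbove_apply,
      Fin.insertNthEquiv, Equiv.coe_fn_symm_mk, Fin.removeNth,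
      Fin.sum_univ_succAbove (fun i => d i * x i) j, hdj, one_mul]
  rw [hpre, (measurePreserving_piFinSuccAbove μ j).measure_preimage hB.nullMeasurableSet,
    Measure.prod_apply_symm hB]
  calc ∫⁻ z, μ j ((fun y => (y, z)) ⁻¹' B) ∂Measure.pi (fun i => μ (j.succAbove i))
      ≤ ∫⁻ _, ε ∂Measure.pi (fun i => μ (j.succAbove i)) :=
        lintegral_mono fun z => hε (∑ i, d (j.succAbove i) * z i)
    _ = ε := by rw [lintegral_const, measure_univ, mul_one]

lemma mul_one_sub_le_integral_abs {α : Type*} [MeasurableSpace α] {μ : Measure α}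
    [IsProbabilityMeasure μ] {f : α → ℝ} (hf : Integrable f μ) {r ε : ℝ} (hr : 0 ≤ r)
    (h : μ.real {x | |f x| ≤ r} ≤ ε) :
    r * (1 - ε) ≤ ∫ x, |f x| ∂μ := by
  have hcover : 1 ≤ μ.real {x | |f x| ≤ r} + μ.real {x | r ≤ |f x|} := by
    calc 1 = μ.real Set.univ := probReal_univ.symm
      _ ≤ μ.real ({x | |f x| ≤ r} ∪ {x | r ≤ |f x|}) :=
        measureReal_mono fun x _ => le_total |f x| r
      _ ≤ _ := measureReal_union_le _ _
  calc r * (1 - ε) ≤ r * μ.real {x | r ≤ |f x|} := by gcongr; linarith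
    _ ≤ ∫ x, |f x| ∂μ :=
      mul_meas_ge_le_integral_of_nonneg (ae_of_all _ fun x => abs_nonneg _) hf.abs r

theorem stmt_17_general (n k : ℕ)
    (c a : Fin n → ℝ)
    (ha01 : ∀ i, a i = 0 ∨ a i = 1)
    (hc : (Finset.univ.filter fun i => c i = 1).card = 2 * k + 2)
    (ha : (Finset.univ.filter fun i => a i = 1).card ≤ 2 * k) :
    (Measure.pi fun _ : Fin n => gaussianReal 0 1)
        {x | |∑ i, (c i - a i) * x i| ≤ 1 / 4} ≤ ENNReal.ofReal (1 / 3) ∧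
      (1 / 6 : ℝ) ≤ ∫ x : Fin n → ℝ, |(∑ i, c i * x i) - ∑ i, a i * x i|
          ∂(Measure.pi fun _ : Fin n => gaussianReal 0 1) := by
  obtain ⟨j, hjc, hja⟩ := Finset.exists_mem_notMem_of_card_lt_card
    (s := Finset.univ.filter fun i => a i = 1) (t := Finset.univ.filter fun i => c i = 1)
    (by omega)
  have hdj : c j - a j = 1 := by
    simp only [Finset.mem_filter, Finset.mem_univ, true_and] at hjc hja
    rw [hjc, (ha01 j).resolve_right hja, sub_zero]
  obtain ⟨m, rfl⟩ := Nat.exists_eq_add_one_of_ne_zero j.pos.ne'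
  have hsmall : (Measure.pi fun _ : Fin (m + 1) => gaussianReal 0 1)
      {x | |∑ i, (c i - a i) * x i| ≤ 1 / 4} ≤ ENNReal.ofReal (1 / 3) :=
    measure_pi_sum_mul_mem_le _ _ hdj (s := {y | |y| ≤ 1 / 4})
      (measurableSet_le (by fun_prop) measurable_const) gaussianReal_abs_add_le_quarter
  have hint : Integrable (fun x : Fin (m + 1) → ℝ => ∑ i, (c i - a i) * x i)
      (Measure.pi fun _ => gaussianReal 0 1) :=
    integrable_finsetSum _ fun i _ =>
      (integrable_eval ((memLp_id_gaussianReal 1).integrable le_rfl)).const_mul _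
  have hfar := mul_one_sub_le_integral_abs hint (by norm_num)
    (ENNReal.toReal_le_of_le_ofReal (by norm_num) hsmall)
  refine ⟨hsmall, ?_⟩
  simp_rw [← Finset.sum_sub_distrib, ← sub_mul]
  linarith

/-- if `f₁(x) = ∑ c_i x_i` is `(2k+2)`-linear and `f₂(x) = ∑ a_i x_i`
is `2k`-linear, both with 0/1 coefficients, then under the standard Gaussian product
measure the probability that `|f₁(x) − f₂(x)| ≤ 1/4` is at most `1/3`, and
consequently the `ℓ₁`-distance between `f₁` and `f₂` is at least `1/6`. -/
theorem stmt_17 (n k : ℕ) (hn : 2 * k + 2 ≤ n)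
    (c a : Fin n → ℝ)
    (hc01 : ∀ i, c i = 0 ∨ c i = 1) (ha01 : ∀ i, a i = 0 ∨ a i = 1)
    (hc : (Finset.univ.filter fun i => c i = 1).card = 2 * k + 2)
    (ha : (Finset.univ.filter fun i => a i = 1).card ≤ 2 * k) :
    (Measure.pi fun _ : Fin n => gaussianReal 0 1)
        {x | |∑ i, (c i - a i) * x i| ≤ 1 / 4} ≤ ENNReal.ofReal (1 / 3) ∧
      (1 / 6 : ℝ) ≤ ∫ x : Fin n → ℝ, |(∑ i, c i * x i) - ∑ i, a i * x i|
          ∂(Measure.pi fun _ : Fin n => gaussianReal 0 1) :=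
  stmt_17_general n k c a ha01 hc ha
end
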